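/- Let G be a graph with distinct vertices v1, v2, v3, v4 such that N(v3) ∪ N(v4) ⊆ N[v1] ∪ N[v2] and d(v3) + d(v4) ≥ d(v1) + d(v2) + 4 + 2·(1[v3v4 ∈ E] − 1[v1v2 ∈ E]). Then there exists j ∈ {1, 2} and two distinct vertices u1, u2 ∈ N(vj) \ (N(v3−j) ∪ {v1,v2,v3,v4}) such that u1 and u2 are both adjacent to v3 and to v4. -/

import Mathlib

/-- Degree of `v` in `G`. -/
noncomputable def deg {V : Type*} (G : SimpleGraph V) (v : V) : ℕ :=
  Nat.card ↥(G.neighborSet v)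

/-- Degree of `v` in the induced subgraph `G - D` obtained by deleting the vertex set `D`. -/
noncomputable def delDeg {V : Type*} (G : SimpleGraph V) (D : Finset V) (v : V) : ℕ :=
  Nat.card ↥(G.neighborSet v \ ↑D)

/-!
Write `W = {v1, v2, v3, v4}` and, for `u ∉ W`, let `a u` and `b u` count the neighbours of `u`
among `v1, v2` and among `v3, v4`. Summing degrees over all vertices, the edges inside `W`
contribute exactly `2 (1[v3v4] - 1[v1v2])`, so the degree condition says
`∑_{u ∉ W} (b u - a u) ≥ 4`. The covering hypothesis gives `b u - a u ≤ 1`, with equality only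
when `u` is adjacent to `v3`, to `v4` and to exactly one of `v1, v2`. So there are at least four
such `u`, and by pigeonhole two of them share the same `vj`.
-/

open Finset

namespace SimpleGraph

variable {V : Type*} (G : SimpleGraph V) [DecidableRel G.Adj]

theorem deg_eq_degree [Fintype V] (v : V) : deg G v = G.degree v := by
  rw [deg, Nat.card_eq_fintype_card, card_neighborSet_eq_degree]

theorem degree_eq_sum_adjMatrix [Fintype V] (v : V) :
    (G.degree v : ℤ) = ∑ u, G.adjMatrix ℤ v u := by
  simpa [Matrix.mulVec, dotProduct] using (G.adjMatrix_mulVec_const_apply (a := (1 : ℤ))).symm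

theorem sum_adjMatrix_quadruple [DecidableEq V] {v1 v2 v3 v4 : V} (h12 : v1 ≠ v2)
    (h13 : v1 ≠ v3) (h14 : v1 ≠ v4) (h23 : v2 ≠ v3) (h24 : v2 ≠ v4) (h34 : v3 ≠ v4) :
    ∑ u ∈ {v1, v2, v3, v4}, (G.adjMatrix ℤ v3 u + G.adjMatrix ℤ v4 u -
      G.adjMatrix ℤ v1 u - G.adjMatrix ℤ v2 u) =
      2 * G.adjMatrix ℤ v3 v4 - 2 * G.adjMatrix ℤ v1 v2 := by
  rw [sum_insert (by simp [h12, h13, h14]), sum_insert (by simp [h23, h24]),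
    sum_insert (by simp [h34]), sum_singleton]
  simp only [adjMatrix_apply, G.adj_comm v2 v1, G.adj_comm v3 v1, G.adj_comm v4 v1,
    G.adj_comm v3 v2, G.adj_comm v4 v2, G.adj_comm v4 v3, SimpleGraph.irrefl, if_false]
  ring

theorem adjMatrix_sub_le_indicator {v1 v2 v3 v4 u : V}
    (hcov : G.Adj v3 u ∨ G.Adj v4 u → G.Adj v1 u ∨ G.Adj v2 u) :
    G.adjMatrix ℤ v3 u + G.adjMatrix ℤ v4 u - G.adjMatrix ℤ v1 u - G.adjMatrix ℤ v2 u ≤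
      (if G.Adj v1 u ∧ ¬G.Adj v2 u ∧ G.Adj v3 u ∧ G.Adj v4 u then 1 else 0) +
      (if G.Adj v2 u ∧ ¬G.Adj v1 u ∧ G.Adj v3 u ∧ G.Adj v4 u then 1 else 0) := by
  simp only [adjMatrix_apply]
  split_ifs <;> grind

variable [Fintype V] [DecidableEq V]

def privateCommonNeighbors (W : Finset V) (w w' x y : V) : Finset V :=
  {u ∈ Wᶜ | G.Adj w u ∧ ¬G.Adj w' u ∧ G.Adj x u ∧ G.Adj y u}

theorem exists_pair_of_one_lt_card_privateCommonNeighbors {W : Finset V} {w w' x y : V}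
    (h : 1 < #(G.privateCommonNeighbors W w w' x y)) :
    ∃ u1 u2 : V, u1 ≠ u2 ∧
      u1 ∈ G.neighborSet w \ (G.neighborSet w' ∪ ↑W) ∧
      u2 ∈ G.neighborSet w \ (G.neighborSet w' ∪ ↑W) ∧
      G.Adj u1 x ∧ G.Adj u1 y ∧ G.Adj u2 x ∧ G.Adj u2 y := by
  obtain ⟨u1, hu1, u2, hu2, hne⟩ := one_lt_card.1 h
  simp only [privateCommonNeighbors, mem_filter, mem_compl] at hu1 hu2
  refine ⟨u1, u2, hne, ?_, ?_, hu1.2.2.2.1.symm, hu1.2.2.2.2.symm, hu2.2.2.2.1.symm,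
    hu2.2.2.2.2.symm⟩ <;> simp [*]

theorem four_le_card_privateCommonNeighbors {v1 v2 v3 v4 : V} (h12 : v1 ≠ v2)
    (h13 : v1 ≠ v3) (h14 : v1 ≠ v4) (h23 : v2 ≠ v3) (h24 : v2 ≠ v4) (h34 : v3 ≠ v4)
    (hcov : G.neighborSet v3 ∪ G.neighborSet v4 ⊆
      insert v1 (G.neighborSet v1) ∪ insert v2 (G.neighborSet v2))
    (hdeg : (G.degree v1 : ℤ) + G.degree v2 + 4 +
        2 * (G.adjMatrix ℤ v3 v4 - G.adjMatrix ℤ v1 v2) ≤ G.degree v3 + G.degree v4) :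
    4 ≤ #(G.privateCommonNeighbors {v1, v2, v3, v4} v1 v2 v3 v4) +
      #(G.privateCommonNeighbors {v1, v2, v3, v4} v2 v1 v3 v4) := by
  set W : Finset V := {v1, v2, v3, v4}
  set f : V → ℤ := fun u =>
    G.adjMatrix ℤ v3 u + G.adjMatrix ℤ v4 u - G.adjMatrix ℤ v1 u - G.adjMatrix ℤ v2 u
  have hsum : ∑ u ∈ W, f u + ∑ u ∈ Wᶜ, f u =
      G.degree v3 + G.degree v4 - G.degree v1 - G.degree v2 := by
    rw [sum_add_sum_compl]
    simp only [f, sum_add_distrib, sum_sub_distrib, degree_eq_sum_adjMatrix]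
  have hcompl : ∑ u ∈ Wᶜ, f u ≤ #(G.privateCommonNeighbors W v1 v2 v3 v4) +
      #(G.privateCommonNeighbors W v2 v1 v3 v4) := by
    calc ∑ u ∈ Wᶜ, f u
        ≤ ∑ u ∈ Wᶜ,
            ((if G.Adj v1 u ∧ ¬G.Adj v2 u ∧ G.Adj v3 u ∧ G.Adj v4 u then 1 else 0) +
              (if G.Adj v2 u ∧ ¬G.Adj v1 u ∧ G.Adj v3 u ∧ G.Adj v4 u then 1 else 0)) := by
          refine sum_le_sum fun u hu => G.adjMatrix_sub_le_indicator fun h => ?_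
          have := hcov h
          simp_all [W]
      _ = _ := by simp only [sum_add_distrib, sum_boole, privateCommonNeighbors]
  linarith [G.sum_adjMatrix_quadruple h12 h13 h14 h23 h24 h34]

end SimpleGraph

open SimpleGraph

open Classical in
/-- Pigeonhole conclusion of inequality (3): one side of the symmetric difference of
`N(v1)` and `N(v2)` contains two common neighbors of `v3` and `v4`. -/
theorem stmt_8 {V : Type*} [Fintype V] (G : SimpleGraph V) (v1 v2 v3 v4 : V)
    (hdist : [v1, v2, v3, v4].Pairwise (· ≠ ·))
    (hcov : G.neighborSet v3 ∪ G.neighborSet v4 ⊆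
      insert v1 (G.neighborSet v1) ∪ insert v2 (G.neighborSet v2))
    (hdeg : (deg G v1 : ℤ) + deg G v2 + 4 +
        2 * ((if G.Adj v3 v4 then (1 : ℤ) else 0) - (if G.Adj v1 v2 then (1 : ℤ) else 0)) ≤
      (deg G v3 : ℤ) + deg G v4) :
    ∃ w w' : V, ((w = v1 ∧ w' = v2) ∨ (w = v2 ∧ w' = v1)) ∧
      ∃ u1 u2 : V, u1 ≠ u2 ∧
        u1 ∈ G.neighborSet w \ (G.neighborSet w' ∪ ({v1, v2, v3, v4} : Set V)) ∧
        u2 ∈ G.neighborSet w \ (G.neighborSet w' ∪ ({v1, v2, v3, v4} : Set V)) ∧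
        G.Adj u1 v3 ∧ G.Adj u1 v4 ∧ G.Adj u2 v3 ∧ G.Adj u2 v4 := by
  simp only [List.pairwise_cons, List.mem_cons, List.not_mem_nil, forall_eq_or_imp] at hdist
  obtain ⟨⟨h12, h13, h14, -⟩, ⟨h23, h24, -⟩, ⟨h34, -⟩, -⟩ := hdist
  have hcard := G.four_le_card_privateCommonNeighbors h12 h13 h14 h23 h24 h34 hcov
    (by simpa only [deg_eq_degree, adjMatrix_apply] using hdeg)
  have hW : (({v1, v2, v3, v4} : Finset V) : Set V) = {v1, v2, v3, v4} := by push_cast; rfl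
  rcases (by omega : 1 < #(G.privateCommonNeighbors {v1, v2, v3, v4} v1 v2 v3 v4) ∨
      1 < #(G.privateCommonNeighbors {v1, v2, v3, v4} v2 v1 v3 v4)) with h | h
  · exact ⟨v1, v2, .inl ⟨rfl, rfl⟩,
      hW ▸ exists_pair_of_one_lt_card_privateCommonNeighbors G h⟩
  · exact ⟨v2, v1, .inr ⟨rfl, rfl⟩,
      hW ▸ exists_pair_of_one_lt_card_privateCommonNeighbors G h⟩
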